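/- arXiv:1412.1641 — 3 statements merged into one kernel-verified Lean document; each statement's English description precedes it below -/
import Mathlib

section
/- Let A = (Q, Σ, ·, i, F) be a minimal, partially ordered and confluent DFA. The language L(A) is 2-piecewise testable if and only if for every letter a ∈ Σ and every state p such that p = i·w for some word w containing at least one occurrence of a, one has p·ua = p·aua for every word u ∈ Σ*. -/
/-- `subk k w` is the set of scattered subwords of `w` of length at most `k`. -/
def subk {α : Type*} (k : ℕ) (w : List α) : Set (List α) :=
  {u | u.length ≤ k ∧ u.Sublist w}

/-- Two words are `k`-equivalent if they have the same subwords of length at most `k`. -/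
def kEquiv {α : Type*} (k : ℕ) (u v : List α) : Prop :=
  subk k u = subk k v

/-- A language is `k`-piecewise testable (Simon's characterization):
`k`-equivalent words are equi-members. -/
def IsPT {α : Type*} (k : ℕ) (L : Language α) : Prop :=
  ∀ u v : List α, kEquiv k u v → (u ∈ L ↔ v ∈ L)

/-- A DFA is minimal if all states are reachable and pairwise distinguishable. -/
def IsMinimalDFA {α σ : Type*} (A : DFA α σ) : Prop :=
  (∀ q : σ, ∃ w : List α, A.eval w = q) ∧
  ∀ p q : σ,
    (∀ w : List α, (A.evalFrom p w ∈ A.accept ↔ A.evalFrom q w ∈ A.accept)) → p = q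

/-- There is a simple path (pairwise distinct states) with `m` transitions in the DFA `A`. -/
def DFAHasSimplePath {α σ : Type*} (A : DFA α σ) (m : ℕ) : Prop :=
  ∃ (qs : Fin (m + 1) → σ) (as : Fin m → α),
    Function.Injective qs ∧ ∀ i : Fin m, A.step (qs i.castSucc) (as i) = qs i.succ

/-- The depth of a DFA: the number of transitions on a longest simple path. -/
noncomputable def dfaDepth {α σ : Type*} (A : DFA α σ) : ℕ :=
  sSup {m | DFAHasSimplePath A m}

/-- There is a simple path (pairwise distinct states) with `m` transitions in the NFA `A`. -/
def NFAHasSimplePath {α σ : Type*} (A : NFA α σ) (m : ℕ) : Prop :=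
  ∃ (qs : Fin (m + 1) → σ) (as : Fin m → α),
    Function.Injective qs ∧ ∀ i : Fin m, qs i.succ ∈ A.step (qs i.castSucc) (as i)

/-- The depth of an NFA: the number of transitions on a longest simple path. -/
noncomputable def nfaDepth {α σ : Type*} (A : NFA α σ) : ℕ :=
  sSup {m | NFAHasSimplePath A m}

/-- Reachability between states of a DFA. -/
def dfaReach {α σ : Type*} (A : DFA α σ) (p q : σ) : Prop :=
  ∃ w : List α, A.evalFrom p w = q

/-- A DFA is partially ordered if its reachability relation is a partial order. -/
def IsPartiallyOrderedDFA {α σ : Type*} (A : DFA α σ) : Prop :=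
  ∀ p q : σ, dfaReach A p q → dfaReach A q p → p = q

/-- A DFA is confluent if it is `Γ`-confluent for every subalphabet `Γ`. -/
def IsConfluentDFA {α σ : Type*} (A : DFA α σ) : Prop :=
  ∀ (Γ : Set α) (q : σ) (u v : List α), (∀ a ∈ u, a ∈ Γ) → (∀ a ∈ v, a ∈ Γ) →
    ∃ w : List α, (∀ a ∈ w, a ∈ Γ) ∧
      A.evalFrom (A.evalFrom q u) w = A.evalFrom (A.evalFrom q v) w

/-!
If `a` occurs in `x`, the words `x u a z` and `x a u a z` have the same subwords of length at
most 2, so 2-piecewise testability forces them into the same state, and minimality turns this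
into the stated identity.

Conversely, the identity lets one erase a letter that occurs both before and after it. Together
with the partial order it lets one swap two letters already read, and absorb a final letter `c`
into a prefix that contains `c` and in which every letter is followed by some `c`; together with
confluence it lets one rearrange a block whose letters all occur again later. Each of these
rewritings preserves both the reached state and the 2-subwords. For `h u ∼₂ h v` with `u ≠ v`,
one of them always turns the pair into `h' u' ∼₂ h' v'` with shorter `u', v'`, so induction on
`|u| + |v|` gives `i·u = i·v`.
-/

open List

namespace List

variable {α : Type*} {e f c : α} {t x y : List α}

theorem pair_sublist_cons_iff : [e, f] <+ c :: t ↔ (e = c ∧ f ∈ t) ∨ [e, f] <+ t := by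
  rw [sublist_cons_iff]
  simp [singleton_sublist, or_comm]

theorem pair_sublist_append_iff :
    [e, f] <+ x ++ y ↔ [e, f] <+ x ∨ [e, f] <+ y ∨ (e ∈ x ∧ f ∈ y) := by
  rw [sublist_append_iff]
  constructor
  · rintro ⟨_ | ⟨e', _ | ⟨f', l₁⟩⟩, l₂, heq, h₁, h₂⟩
    · simp_all
    · simp only [cons_append, nil_append, cons.injEq] at heq
      obtain ⟨rfl, rfl⟩ := heq
      exact Or.inr (Or.inr ⟨singleton_sublist.mp h₁, singleton_sublist.mp h₂⟩)
    · simp only [cons_append, cons.injEq, nil_eq, append_eq_nil_iff] at heq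
      obtain ⟨rfl, rfl, rfl, rfl⟩ := heq
      exact Or.inl h₁
  · rintro (h | h | ⟨he, hf⟩)
    · exact ⟨[e, f], [], by simp, h, nil_sublist _⟩
    · exact ⟨[], [e, f], rfl, nil_sublist _, h⟩
    · exact ⟨[e], [f], rfl, singleton_sublist.mpr he, singleton_sublist.mpr hf⟩

theorem pair_sublist_append_of_mem (he : e ∈ x) (hf : f ∈ y) : [e, f] <+ x ++ y :=
  pair_sublist_append_iff.mpr (Or.inr (Or.inr ⟨he, hf⟩))

theorem mem_of_pair_sublist_cons (h : [e, f] <+ c :: t) : f ∈ t := by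
  rcases pair_sublist_cons_iff.mp h with ⟨-, hf⟩ | h
  · exact hf
  · exact h.subset (by simp)

theorem mem_of_pair_sublist_append_singleton (h : [e, f] <+ x ++ [c]) : e ∈ x := by
  rcases pair_sublist_append_iff.mp h with h | h | ⟨he, -⟩
  · exact h.subset (by simp)
  · simpa using h.length_le
  · exact he

theorem pair_sublist_right_of_notMem (he : e ∉ x) (h : [e, f] <+ x ++ y) : [e, f] <+ y := by
  rcases pair_sublist_append_iff.mp h with h | h | ⟨he', -⟩
  · exact absurd (h.subset (by simp)) he
  · exact h
  · exact absurd he' he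

theorem pair_sublist_left_of_notMem (hf : f ∉ y) (h : [e, f] <+ x ++ y) : [e, f] <+ x := by
  rcases pair_sublist_append_iff.mp h with h | h | ⟨-, hf'⟩
  · exact h
  · exact absurd (h.subset (by simp)) hf
  · exact absurd hf' hf

theorem exists_eq_append_cons_notMem (hc : c ∈ x) : ∃ g m, x = g ++ c :: m ∧ c ∉ m := by
  classical
  obtain ⟨l₁, l₂, h₁, h₂, -⟩ := exists_erase_eq (mem_reverse.mpr hc)
  exact ⟨l₂.reverse, l₁.reverse, by simpa using congrArg reverse h₂, by simpa using h₁⟩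

end List

section Subwords

variable {α : Type*} {k : ℕ} {u v x : List α}

theorem subk_mono (h : u <+ v) : subk k u ⊆ subk k v :=
  fun _ ⟨hlen, hs⟩ => ⟨hlen, hs.trans h⟩

theorem subk_append_left_subset (h : subk k u ⊆ subk k v) (x : List α) :
    subk k (x ++ u) ⊆ subk k (x ++ v) := by
  rintro s ⟨hlen, hs⟩
  obtain ⟨s₁, s₂, rfl, h₁, h₂⟩ := sublist_append_iff.mp hs
  have hs₂ : s₂ ∈ subk k v := h ⟨by simp only [length_append] at hlen; omega, h₂⟩
  exact ⟨hlen, h₁.append hs₂.2⟩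

theorem subk_append_right_subset (h : subk k u ⊆ subk k v) (z : List α) :
    subk k (u ++ z) ⊆ subk k (v ++ z) := by
  rintro s ⟨hlen, hs⟩
  obtain ⟨s₁, s₂, rfl, h₁, h₂⟩ := sublist_append_iff.mp hs
  have hs₁ : s₁ ∈ subk k v := h ⟨by simp only [length_append] at hlen; omega, h₁⟩
  exact ⟨hlen, hs₁.2.append h₂⟩

theorem subk_two_subset (hmem : ∀ e ∈ u, e ∈ v)
    (hpair : ∀ e f, [e, f] <+ u → [e, f] <+ v) : subk 2 u ⊆ subk 2 v := by
  rintro (_ | ⟨e, _ | ⟨f, _ | ⟨g, s⟩⟩⟩) ⟨hlen, hs⟩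
  · exact ⟨hlen, nil_sublist _⟩
  · exact ⟨hlen, singleton_sublist.mpr (hmem e (singleton_sublist.mp hs))⟩
  · exact ⟨hlen, hpair e f hs⟩
  · simp at hlen

namespace kEquiv

theorem append_left (h : kEquiv k u v) (x : List α) : kEquiv k (x ++ u) (x ++ v) :=
  (subk_append_left_subset h.subset x).antisymm (subk_append_left_subset h.symm.subset x)

theorem append_right (h : kEquiv k u v) (z : List α) : kEquiv k (u ++ z) (v ++ z) :=
  (subk_append_right_subset h.subset z).antisymm (subk_append_right_subset h.symm.subset z)

theorem mem_iff (h : kEquiv 2 u v) (e : α) : e ∈ u ↔ e ∈ v := by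
  simpa [subk] using Set.ext_iff.mp h [e]

theorem pair_sublist_iff (h : kEquiv 2 u v) (e f : α) : [e, f] <+ u ↔ [e, f] <+ v := by
  simpa [subk] using Set.ext_iff.mp h [e, f]

end kEquiv

variable {a b c : α} {y P P' Z : List α}

theorem kEquiv_erase_middle (hx : c ∈ x) (hy : c ∈ y) : kEquiv 2 (x ++ c :: y) (x ++ y) := by
  refine (subk_two_subset (fun e he => ?_) (fun e f hef => ?_)).antisymm
    (subk_mono ((sublist_cons_self c y).append_left x))
  · simp only [mem_append, mem_cons] at he ⊢
    rcases he with he | rfl | he <;> tauto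
  · rw [pair_sublist_append_iff, pair_sublist_cons_iff, mem_cons] at hef
    rw [pair_sublist_append_iff]
    rcases hef with h | (⟨rfl, h⟩ | h) | ⟨he, rfl | hf⟩ <;> tauto

theorem subk_swap_subset (ha : a ∈ x) (hb : b ∈ x) :
    subk 2 (x ++ [a, b]) ⊆ subk 2 (x ++ [b, a]) := by
  refine subk_two_subset (fun e he => ?_) (fun e f hef => ?_)
  · simp only [mem_append, mem_cons] at he ⊢
    tauto
  · rw [pair_sublist_append_iff] at hef ⊢
    rcases hef with h | h | ⟨he, hf⟩
    · exact Or.inl h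
    · rw [pair_sublist_cons_iff] at h
      simp only [mem_singleton] at h
      rcases h with ⟨rfl, rfl⟩ | h
      · exact Or.inr (Or.inr ⟨ha, by simp⟩)
      · simpa using h.length_le
    · exact Or.inr (Or.inr ⟨he, by simp only [mem_cons] at hf ⊢; tauto⟩)

theorem kEquiv_swap (ha : a ∈ x) (hb : b ∈ x) : kEquiv 2 (x ++ [a, b]) (x ++ [b, a]) :=
  (subk_swap_subset ha hb).antisymm (subk_swap_subset hb ha)

theorem subk_permute_block_subset (hP : ∀ c ∈ P, c ∈ P') (hZ : ∀ c ∈ P, c ∈ Z) :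
    subk 2 (P ++ Z) ⊆ subk 2 (P' ++ Z) := by
  refine subk_two_subset (fun e he => ?_) (fun e f hef => ?_)
  · simp only [mem_append] at he ⊢
    rcases he with he | he
    · exact Or.inl (hP e he)
    · exact Or.inr he
  · rw [pair_sublist_append_iff] at hef ⊢
    rcases hef with h | h | ⟨he, hf⟩
    · exact Or.inr (Or.inr ⟨hP e (h.subset (by simp)), hZ f (h.subset (by simp))⟩)
    · exact Or.inr (Or.inl h)
    · exact Or.inr (Or.inr ⟨hP e he, hf⟩)

theorem kEquiv_permute_block (hP : ∀ c, c ∈ P ↔ c ∈ P') (hZ : ∀ c ∈ P, c ∈ Z) :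
    kEquiv 2 (P ++ Z) (P' ++ Z) :=
  (subk_permute_block_subset (fun c => (hP c).mp) hZ).antisymm
    (subk_permute_block_subset (fun c => (hP c).mpr) fun c hc => hZ c ((hP c).mpr hc))

end Subwords

namespace DFA

variable {α σ : Type*} (A : DFA α σ)

def SkipsSeenLetters : Prop :=
  ∀ (a : α) (p : σ), (∃ w : List α, A.eval w = p ∧ a ∈ w) →
    ∀ u : List α, A.evalFrom p (u ++ [a]) = A.evalFrom p (a :: (u ++ [a]))

def Interchangeable (w w' : List α) : Prop :=
  A.eval w = A.eval w' ∧ kEquiv 2 w w'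

theorem eval_append (x y : List α) : A.eval (x ++ y) = A.evalFrom (A.eval x) y :=
  A.evalFrom_of_append A.start x y

namespace Interchangeable

variable {A} {w w' w'' : List α}

theorem refl (w : List α) : A.Interchangeable w w := ⟨rfl, rfl⟩

theorem trans (h : A.Interchangeable w w') (h' : A.Interchangeable w' w'') :
    A.Interchangeable w w'' :=
  ⟨h.1.trans h'.1, h.2.trans h'.2⟩

theorem append_right (h : A.Interchangeable w w') (z : List α) :
    A.Interchangeable (w ++ z) (w' ++ z) :=
  ⟨by rw [eval_append, eval_append, h.1], h.2.append_right z⟩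

end Interchangeable

namespace SkipsSeenLetters

variable {A} (hA : A.SkipsSeenLetters) {a b c : α} {w x y m P P' Z : List α}
include hA

theorem interchangeable_erase_middle (hx : c ∈ x) (hy : c ∈ y) :
    A.Interchangeable (x ++ c :: y) (x ++ y) := by
  refine ⟨?_, kEquiv_erase_middle hx hy⟩
  obtain ⟨U, V, rfl⟩ := append_of_mem hy
  have hskip := hA c _ ⟨x, rfl, hx⟩ U
  calc A.eval (x ++ c :: (U ++ c :: V))
      = A.evalFrom (A.evalFrom (A.eval x) (c :: (U ++ [c]))) V := by
        simp [eval_append, evalFrom_of_append]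
    _ = A.evalFrom (A.evalFrom (A.eval x) (U ++ [c])) V := by rw [hskip]
    _ = A.eval (x ++ (U ++ c :: V)) := by simp [eval_append, evalFrom_of_append]

theorem interchangeable_swap (hpo : IsPartiallyOrderedDFA A) (ha : a ∈ x) (hb : b ∈ x) :
    A.Interchangeable (x ++ [a, b]) (x ++ [b, a]) := by
  refine ⟨?_, kEquiv_swap ha hb⟩
  have hba := hA a _ ⟨x, rfl, ha⟩ [b]
  have hab := hA b _ ⟨x, rfl, hb⟩ [a]
  rw [eval_append, eval_append]
  refine hpo _ _ ⟨[a], ?_⟩ ⟨[b], ?_⟩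
  · simpa [evalFrom_of_append] using hba.symm
  · simpa [evalFrom_of_append] using hab.symm

theorem interchangeable_move_forward (hpo : IsPartiallyOrderedDFA A) (hc : c ∈ x)
    (hm : ∀ d ∈ m, d ∈ x) (y : List α) :
    A.Interchangeable (x ++ (m ++ c :: y)) (x ++ c :: (m ++ y)) := by
  induction m generalizing x with
  | nil => exact .refl _
  | cons d m ih =>
    have hd : d ∈ x := hm d mem_cons_self
    have hmove := ih (x := x ++ [d]) (by simp [hc]) fun e he => by simp [hm e (by simp [he])]
    have hswap := (interchangeable_swap hA hpo hd hc).append_right (m ++ y)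
    simp only [append_assoc, cons_append, nil_append] at hmove hswap ⊢
    exact hmove.trans hswap

theorem interchangeable_absorb (hpo : IsPartiallyOrderedDFA A) (hc : c ∈ x)
    (hpair : ∀ d ∈ x, [d, c] <+ x) : A.Interchangeable (x ++ [c]) x := by
  obtain ⟨g, m, rfl, hcm⟩ := exists_eq_append_cons_notMem hc
  have hsplit : g ++ c :: m = (g ++ [c]) ++ m := by simp
  have hg : ∀ d ∈ g ++ c :: m, d ∈ g := fun d hd =>
    mem_of_pair_sublist_append_singleton
      (pair_sublist_left_of_notMem hcm (hsplit ▸ hpair d hd))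
  have herase := interchangeable_erase_middle hA (hg c (by simp)) (y := m ++ [c]) (by simp)
  have hmove := interchangeable_move_forward hA hpo (hg c (by simp)) (m := m)
    (fun d hd => hg d (by simp [hd])) []
  simp only [append_assoc, cons_append, append_nil] at herase hmove ⊢
  exact herase.trans hmove

theorem interchangeable_erase_block (hy : ∀ c ∈ w, c ∈ y) (hZ : ∀ c ∈ w, c ∈ Z) :
    A.Interchangeable (y ++ (w ++ Z)) (y ++ Z) := by
  induction w with
  | nil => exact .refl _
  | cons c w ih =>
    have herase := interchangeable_erase_middle hA (hy c mem_cons_self) (y := w ++ Z)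
      (mem_append_right w (hZ c mem_cons_self))
    exact herase.trans (ih (fun d hd => hy d (mem_cons_of_mem c hd))
      fun d hd => hZ d (mem_cons_of_mem c hd))

theorem interchangeable_permute_block (hconf : IsConfluentDFA A) (hP : ∀ c, c ∈ P ↔ c ∈ P')
    (hZ : ∀ c ∈ P, c ∈ Z) : A.Interchangeable (x ++ (P ++ Z)) (x ++ (P' ++ Z)) := by
  refine ⟨?_, (kEquiv_permute_block hP hZ).append_left x⟩
  obtain ⟨w, hw, hmerge⟩ := hconf {c | c ∈ P} (A.eval x) P P' (fun _ h => h)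
    fun c h => (hP c).mpr h
  have hinsert : ∀ Q : List α, (∀ c, c ∈ P ↔ c ∈ Q) →
      A.eval (x ++ (Q ++ Z)) = A.evalFrom (A.evalFrom (A.evalFrom (A.eval x) Q) w) Z := by
    intro Q hQ
    have := (interchangeable_erase_block hA (y := x ++ Q) (w := w) (Z := Z)
      (fun c hc => mem_append_right x ((hQ c).mp (hw c hc))) fun c hc => hZ c (hw c hc)).1
    simp only [eval_append, evalFrom_of_append, append_assoc] at this ⊢
    exact this.symm
  rw [hinsert P fun _ => .rfl, hinsert P' hP, hmerge]

end SkipsSeenLetters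

variable {A}

variable (A) in
def Shortenable (h u v : List α) : Prop :=
  ∃ h' u' v' : List α, u'.length + v'.length < u.length + v.length ∧
    A.Interchangeable (h ++ u) (h' ++ u') ∧ A.Interchangeable (h ++ v) (h' ++ v')

theorem Shortenable.symm {h u v : List α} (hs : A.Shortenable h u v) : A.Shortenable h v u := by
  obtain ⟨h', u', v', hlt, hu, hv⟩ := hs
  exact ⟨h', v', u', by omega, hv, hu⟩

theorem shortenable_cons_cons (h u v : List α) (a : α) : A.Shortenable h (a :: u) (a :: v) :=
  ⟨h ++ [a], u, v, by simp only [length_cons]; omega, by simpa using .refl _,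
    by simpa using .refl _⟩

namespace SkipsSeenLetters

variable (hA : A.SkipsSeenLetters) {a b : α} {h u v : List α}
include hA

theorem shortenable_of_head_mem (hpo : IsPartiallyOrderedDFA A)
    (hk : kEquiv 2 (h ++ u) (h ++ b :: v)) (hb : b ∈ h) : A.Shortenable h u (b :: v) := by
  by_cases habsorb : ∀ d ∈ h, [d, b] <+ h
  · refine ⟨h, u, v, by simp, .refl _, ?_⟩
    simpa using (interchangeable_absorb hA hpo hb habsorb).append_right v
  by_cases hbv : b ∈ v
  · exact ⟨h, u, v, by simp, .refl _, interchangeable_erase_middle hA hb hbv⟩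
  obtain ⟨d, hd, hdb⟩ : ∃ d ∈ h, ¬[d, b] <+ h := by simpa using habsorb
  have hbu : b ∈ u := by
    rcases pair_sublist_append_iff.mp ((hk.pair_sublist_iff d b).mpr
      (pair_sublist_append_of_mem hd mem_cons_self)) with h' | h' | ⟨-, h'⟩
    · exact absurd h' hdb
    · exact h'.subset (by simp)
    · exact h'
  obtain ⟨U₁, U₂, rfl⟩ := append_of_mem hbu
  -- a pair `e b` with `e ∈ U₁` can only reappear in `h b v` inside `h b`, as `b ∉ v`
  have hU₁ : ∀ e ∈ U₁, e ∈ h := fun e he => by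
    have hpair := (hk.pair_sublist_iff e b).mp
      (pair_sublist_append_of_mem (by simp [he]) (by simp) |>.trans
        (sublist_append_right h _))
    rw [append_cons] at hpair
    exact mem_of_pair_sublist_append_singleton (pair_sublist_left_of_notMem hbv hpair)
  refine ⟨h ++ [b], U₁ ++ U₂, v, by simp only [length_append, length_cons]; omega, ?_,
    by simpa using .refl _⟩
  simpa using interchangeable_move_forward hA hpo hb hU₁ U₂

theorem shortenable_of_heads_notMem (hconf : IsConfluentDFA A)
    (hk : kEquiv 2 (h ++ a :: u) (h ++ b :: v)) (ha : a ∉ h) (hb : b ∉ h) (hab : a ≠ b) :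
    A.Shortenable h (a :: u) (b :: v) := by
  have hav : a ∈ v := by simpa [ha, hab] using (hk.mem_iff a).mp (by simp)
  have hbu : b ∈ u := by simpa [hb, Ne.symm hab] using (hk.mem_iff b).mpr (by simp)
  have huv : ∀ f ∈ u, f ∈ v := fun f hf =>
    mem_of_pair_sublist_cons <| pair_sublist_right_of_notMem ha <| (hk.pair_sublist_iff a f).mp
      (((singleton_sublist.mpr hf).cons_cons a).trans (sublist_append_right h _))
  classical
  obtain ⟨U₁, U₂, hbU₁, rfl, -⟩ := exists_erase_eq hbu
  have hvU₂ : ∀ f ∈ v, f ∈ U₂ := fun f hf => by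
    have hpair := (hk.pair_sublist_iff b f).mpr
      (((singleton_sublist.mpr hf).cons_cons b).trans (sublist_append_right h _))
    rw [show h ++ a :: (U₁ ++ b :: U₂) = (h ++ a :: U₁) ++ b :: U₂ by simp] at hpair
    exact mem_of_pair_sublist_cons
      (pair_sublist_right_of_notMem (by simp [hb, Ne.symm hab, hbU₁]) hpair)
  -- the block `a U₁ b` is rearranged into `b a U₁`, whose letters all reoccur in `U₂`
  have hblock : ∀ c ∈ a :: (U₁ ++ [b]), c ∈ U₂ := by
    intro c hc
    simp only [mem_cons, mem_append, not_mem_nil, or_false] at hc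
    rcases hc with rfl | hc | rfl
    · exact hvU₂ c hav
    · exact hvU₂ c (huv c (by simp [hc]))
    · exact hvU₂ c (huv c hbu)
  refine ⟨h ++ [b], a :: (U₁ ++ U₂), v, by simp only [length_cons, length_append]; omega,
    ?_, by simpa using .refl _⟩
  simpa using interchangeable_permute_block hA (x := h) (P' := b :: a :: U₁) hconf
    (fun c => by simp only [mem_cons, mem_append, not_mem_nil, or_false]; tauto) hblock

theorem shortenable_of_kEquiv (hpo : IsPartiallyOrderedDFA A) (hconf : IsConfluentDFA A)
    (hk : kEquiv 2 (h ++ u) (h ++ v)) (hpos : 0 < u.length + v.length) :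
    A.Shortenable h u v := by
  rcases u with _ | ⟨a, u⟩ <;> rcases v with _ | ⟨b, v⟩
  · simp at hpos
  · exact shortenable_of_head_mem hA hpo hk (by simpa using (hk.mem_iff b).mpr (by simp))
  · exact (shortenable_of_head_mem hA hpo hk.symm
      (by simpa using (hk.mem_iff a).mp (by simp))).symm
  · by_cases hab : a = b
    · exact hab ▸ shortenable_cons_cons h u v a
    by_cases hb : b ∈ h
    · exact shortenable_of_head_mem hA hpo hk hb
    by_cases ha : a ∈ h
    · exact (shortenable_of_head_mem hA hpo hk.symm ha).symm
    exact shortenable_of_heads_notMem hA hconf hk ha hb hab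

theorem eval_eq_of_kEquiv (hpo : IsPartiallyOrderedDFA A) (hconf : IsConfluentDFA A)
    (h u v : List α) (hk : kEquiv 2 (h ++ u) (h ++ v)) : A.eval (h ++ u) = A.eval (h ++ v) := by
  induction hn : u.length + v.length using Nat.strong_induction_on generalizing h u v with
  | _ n ih =>
  rcases Nat.eq_zero_or_pos n with rfl | hpos
  · obtain ⟨rfl, rfl⟩ : u = [] ∧ v = [] := by simpa using hn
    rfl
  obtain ⟨h', u', v', hlt, hu, hv⟩ := shortenable_of_kEquiv hA hpo hconf hk (hn ▸ hpos)
  rw [hu.1, hv.1]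
  exact ih _ (hn ▸ hlt) h' u' v' (hu.2.symm.trans (hk.trans hv.2)) rfl

theorem isPT (hpo : IsPartiallyOrderedDFA A) (hconf : IsConfluentDFA A) : IsPT 2 A.accepts :=
  fun u v hk => by
    rw [mem_accepts, mem_accepts, ← nil_append u, ← nil_append v,
      eval_eq_of_kEquiv hA hpo hconf [] u v hk]

end SkipsSeenLetters

theorem skipsSeenLetters_of_isPT
    (hdist : ∀ p q : σ,
      (∀ w : List α, (A.evalFrom p w ∈ A.accept ↔ A.evalFrom q w ∈ A.accept)) → p = q)
    (hPT : IsPT 2 A.accepts) : A.SkipsSeenLetters := by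
  rintro a _ ⟨x, rfl, hx⟩ u
  refine hdist _ _ fun z => ?_
  have hk := (kEquiv_erase_middle hx (mem_append_right u (mem_singleton_self a))).append_right z
  simp only [← eval_append, ← mem_accepts, append_assoc] at hk ⊢
  exact (hPT _ _ hk).symm

end DFA

theorem stmt4_general {α σ : Type*} (A : DFA α σ)
    (hmin : IsMinimalDFA A) (hpo : IsPartiallyOrderedDFA A) (hconf : IsConfluentDFA A) :
    IsPT 2 A.accepts ↔
      ∀ (a : α) (p : σ), (∃ w : List α, A.eval w = p ∧ a ∈ w) →
        ∀ u : List α, A.evalFrom p (u ++ [a]) = A.evalFrom p (a :: (u ++ [a])) :=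
  ⟨A.skipsSeenLetters_of_isPT hmin.2, fun hA => DFA.SkipsSeenLetters.isPT hA hpo hconf⟩

/-- Characterization of 2-piecewise testability on a minimal partially ordered and
confluent DFA (Lemma 7 of the paper). -/
theorem stmt4 {α σ : Type*} [Fintype α] [Fintype σ] (A : DFA α σ)
    (hmin : IsMinimalDFA A) (hpo : IsPartiallyOrderedDFA A) (hconf : IsConfluentDFA A) :
    IsPT 2 A.accepts ↔
      ∀ (a : α) (p : σ), (∃ w : List α, A.eval w = p ∧ a ∈ w) →
        ∀ u : List α, A.evalFrom p (u ++ [a]) = A.evalFrom p (a :: (u ++ [a])) :=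
  stmt4_general A hmin hpo hconf
end

section
/- Let w be a word over an alphabet Σ in which every letter occurs at most once (|w|_a ≤ 1 for all a ∈ Σ). Then the singleton language {w} is 2-piecewise testable; equivalently, every word u with u ∼_2 w satisfies u = w. -/
/-! A word without repeated letters is determined by its set of letters and their relative order,
and both are read off its subwords of length at most 2. If `u ∼₂ w`, then `u` has no repeated
letter (`aa` is not a subword of `w`) and the same letters as `w`, so it is a permutation of `w`;
both words are sorted for the relation "`ab` is a subword of `w`", which is antisymmetric since `w`
has no repeated letter, and two permutations of each other sorted for an antisymmetric relation
coincide. -/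

open List

theorem kEquiv.sublist_iff {α : Type*} {k : ℕ} {u v s : List α} (h : kEquiv k u v)
    (hs : s.length ≤ k) : s <+ u ↔ s <+ v := by
  simpa [subk, hs] using Set.ext_iff.mp h s

theorem isPT_singleton_iff {α : Type*} {k : ℕ} {w : List α} :
    IsPT k ({w} : Language α) ↔ ∀ u, kEquiv k u w → u = w := by
  refine ⟨fun h u hu => (h u w hu).mpr rfl, fun h u v huv => ?_⟩
  change u = w ↔ v = w
  constructor
  · rintro rfl
    exact h v huv.symm
  · rintro rfl
    exact h u huv

theorem List.Nodup.eq_of_pair_sublist_swap {α : Type*} {l : List α} {a b : α} (hl : l.Nodup)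
    (hab : [a, b] <+ l) (hba : [b, a] <+ l) : a = b := by
  induction l with
  | nil => simp at hab
  | cons c l ih =>
    rw [nodup_cons] at hl
    rw [sublist_cons_iff] at hab hba
    grind [Sublist.subset]

theorem eq_of_kEquiv_of_nodup {α : Type*} {k : ℕ} {u w : List α} (hk : 2 ≤ k) (hw : w.Nodup)
    (h : kEquiv k u w) : u = w := by
  have hpair (a b : α) : [a, b] <+ u ↔ [a, b] <+ w := h.sublist_iff hk
  have hu : u.Nodup := nodup_iff_sublist.mpr fun a ha =>
    nodup_iff_sublist.mp hw a ((hpair a a).mp ha)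
  have hperm : u.Perm w := (perm_ext_iff_of_nodup hu hw).mpr fun a => by
    simpa only [singleton_sublist] using h.sublist_iff (s := [a]) (one_le_two.trans hk)
  refine hperm.eq_of_pairwise (le := fun a b => [a, b] <+ w)
    (fun a b _ _ hab hba => hw.eq_of_pair_sublist_swap hab hba) ?_ ?_
  · exact pairwise_of_forall_sublist fun hab => (hpair _ _).mp hab
  · exact pairwise_of_forall_sublist id

/-- If every letter occurs at most once in `w`, then `{w}` is 2-piecewise testable;
equivalently, every word 2-equivalent to `w` equals `w`. -/
theorem stmt7 {α : Type*} [DecidableEq α] (w : List α)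
    (h : ∀ a : α, w.count a ≤ 1) :
    IsPT 2 ({w} : Language α) ∧ ∀ u : List α, kEquiv 2 u w → u = w := by
  have hw : w.Nodup := nodup_iff_count_le_one.mpr h
  have hsingleton : ∀ u, kEquiv 2 u w → u = w := fun _ hu => eq_of_kEquiv_of_nodup le_rfl hw hu
  exact ⟨isPT_singleton_iff.mpr hsingleton, hsingleton⟩
end

section
/- A regular language L is piecewise testable if and only if there exists a complete NFA recognizing L that is partially ordered and satisfies the unique maximal state (UMS) property. -/
/-- Reachability between states of an NFA. -/
def nfaReach {α σ : Type*} (A : NFA α σ) (p q : σ) : Prop :=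
  ∃ w : List α, q ∈ A.evalFrom {p} w

/-- An NFA is partially ordered if its reachability relation is a partial order. -/
def IsPartiallyOrderedNFA {α σ : Type*} (A : NFA α σ) : Prop :=
  ∀ p q : σ, nfaReach A p q → nfaReach A q p → p = q

/-- An NFA is complete if every state has a transition under every letter. -/
def IsCompleteNFA {α σ : Type*} (A : NFA α σ) : Prop :=
  ∀ (q : σ) (a : α), (A.step q a).Nonempty

/-- `Σ(p)`: the set of letters under which the NFA has a self-loop in `p`. -/
def selfLoopLetters {α σ : Type*} (A : NFA α σ) (p : σ) : Set α :=
  {a | p ∈ A.step p a}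

/-- Edge relation of the directed graph `G(A, Γ)` restricted to transitions labeled in `Γ`. -/
def edgeRel {α σ : Type*} (A : NFA α σ) (Γ : Set α) (p q : σ) : Prop :=
  ∃ a ∈ Γ, q ∈ A.step p a

/-- Two states are in the same (weakly) connected component of `G(A, Γ)`. -/
def sameComponent {α σ : Type*} (A : NFA α σ) (Γ : Set α) (p q : σ) : Prop :=
  Relation.ReflTransGen (fun x y => edgeRel A Γ x y ∨ edgeRel A Γ y x) p q

/-- Directed reachability within `G(A, Γ)`. -/
def reachIn {α σ : Type*} (A : NFA α σ) (Γ : Set α) (p q : σ) : Prop :=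
  Relation.ReflTransGen (edgeRel A Γ) p q

/-- A state is maximal in `G(A, Γ)` if nothing strictly above it is reachable from it. -/
def IsMaximalIn {α σ : Type*} (A : NFA α σ) (Γ : Set α) (q : σ) : Prop :=
  ∀ r : σ, reachIn A Γ q r → reachIn A Γ r q

/-- The unique maximal state (UMS) property: every state `p` is the unique maximal
state of the connected component of `G(A, Σ(p))` containing `p`. -/
def HasUMS {α σ : Type*} (A : NFA α σ) : Prop :=
  ∀ p q : σ, sameComponent A (selfLoopLetters A p) p q →
    (IsMaximalIn A (selfLoopLetters A p) q ↔ q = p)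


open List

theorem List.exists_eq_append_cons_of_exists_mem {β : Type*} {p : β → Prop} {l : List β}
    (h : ∃ x ∈ l, p x) : ∃ P a X, l = P ++ a :: X ∧ p a ∧ ∀ x ∈ P, ¬ p x := by
  induction l with
  | nil => simp at h
  | cons y l ih =>
    by_cases hy : p y
    · exact ⟨[], y, l, rfl, hy, by simp⟩
    · obtain ⟨P, a, X, rfl, ha, hP⟩ := ih (by simpa [hy] using h)
      exact ⟨y :: P, a, X, rfl, ha, forall_mem_cons.2 ⟨hy, hP⟩⟩

theorem List.cons_sublist_append_cons_iff {β : Type*} {c : β} {x P S : List β} (hc : c ∉ P) :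
    c :: x <+ P ++ c :: S ↔ x <+ S := by
  refine ⟨fun h => ?_, fun h => (h.cons_cons c).trans (sublist_append_right P _)⟩
  obtain ⟨_ | ⟨d, l₁⟩, l₂, he, h₁, h₂⟩ := sublist_append_iff.1 h
  · rw [nil_append] at he
    exact (he ▸ h₂).of_cons_cons
  · obtain ⟨rfl, -⟩ := cons_eq_cons.1 he
    exact absurd (h₁.subset mem_cons_self) hc

section Subwords

variable {β γ : Type*} {k n : ℕ} {a b : β} {u v w x : List β}

theorem kEquiv_iff : kEquiv k u v ↔ ∀ x : List β, x.length ≤ k → (x <+ u ↔ x <+ v) := by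
  refine ⟨fun h x hx => ?_, fun h => Set.ext fun x => and_congr_right (h x)⟩
  simpa [kEquiv, subk, Set.ext_iff, hx] using congrArg (x ∈ ·) h

theorem kEquiv.refl (k : ℕ) (u : List β) : kEquiv k u u := rfl

theorem kEquiv.symm (h : kEquiv k u v) : kEquiv k v u := Eq.symm h

theorem kEquiv.trans (h : kEquiv k u v) (h' : kEquiv k v w) : kEquiv k u w := Eq.trans h h'

theorem kEquiv.sublist_iff_s8 (h : kEquiv k u v) (hx : x.length ≤ k) : x <+ u ↔ x <+ v :=
  kEquiv_iff.1 h x hx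

theorem kEquiv.mono (h : kEquiv k u v) (hnk : n ≤ k) : kEquiv n u v :=
  kEquiv_iff.2 fun _ hx => h.sublist_iff_s8 (hx.trans hnk)

theorem kEquiv.mem_iff_s8 (h : kEquiv (k + 1) u v) (a : β) : a ∈ u ↔ a ∈ v := by
  simpa using h.sublist_iff_s8 (x := [a]) (by simp)

theorem subk_append (k : ℕ) (u v : List β) :
    subk k (u ++ v) = {x | x.length ≤ k ∧ ∃ x₁ ∈ subk k u, ∃ x₂ ∈ subk k v, x = x₁ ++ x₂} := by
  ext x
  simp only [subk, Set.mem_ofPred_eq, sublist_append_iff]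
  constructor
  · rintro ⟨hx, x₁, x₂, rfl, h₁, h₂⟩
    simp only [length_append] at hx
    exact ⟨by simpa using hx, x₁, ⟨by omega, h₁⟩, x₂, ⟨by omega, h₂⟩, rfl⟩
  · rintro ⟨hx, x₁, ⟨-, h₁⟩, x₂, ⟨-, h₂⟩, rfl⟩
    exact ⟨hx, x₁, x₂, rfl, h₁, h₂⟩

theorem kEquiv.append {u' v' : List β} (hu : kEquiv k u u') (hv : kEquiv k v v') :
    kEquiv k (u ++ v) (u' ++ v') := by
  unfold kEquiv at *
  rw [subk_append, subk_append, hu, hv]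

theorem kEquiv.of_map {f : β → γ} (hf : Function.Injective f)
    (h : kEquiv k (u.map f) (v.map f)) : kEquiv k u v := by
  have hsub : ∀ {x w : List β}, x.map f <+ w.map f ↔ x <+ w := fun {x w} =>
    ⟨fun hx => by
      obtain ⟨l, hl, he⟩ := sublist_map_iff.1 hx
      rwa [(map_injective_iff.2 hf) he], Sublist.map f⟩
  exact kEquiv_iff.2 fun x hx => by
    rw [← hsub, ← hsub]
    exact h.sublist_iff_s8 (by simpa using hx)

theorem kEquiv.of_append_cons {c : β} {P Q X Y : List β} (hP : c ∉ P) (hQ : c ∉ Q)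
    (h : kEquiv (k + 1) (P ++ c :: X) (Q ++ c :: Y)) : kEquiv k X Y :=
  kEquiv_iff.2 fun x hx => (cons_sublist_append_cons_iff hP).symm.trans <|
    (h.sublist_iff_s8 (x := c :: x) (Nat.succ_le_succ hx)).trans (cons_sublist_append_cons_iff hQ)

theorem kEquiv_append_of_forall_mem (h : ∀ c ∈ x, kEquiv k (c :: w) w) : kEquiv k (x ++ w) w := by
  induction x with
  | nil => exact kEquiv.refl k w
  | cons c x ih =>
    exact ((kEquiv.refl k [c]).append (ih fun d hd => h d (mem_cons_of_mem c hd))).trans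
      (h c mem_cons_self)

section Crossing

variable {u₁ v₁ U V : List β}

theorem cons_sublist_of_kEquiv_append_cons (ha : a ∈ u₁) (ha' : a ∉ v₁)
    (h : kEquiv (n + 2) (u₁ ++ b :: U) (v₁ ++ a :: V)) (hx : x.length ≤ n) (hxU : x <+ U) :
    b :: x <+ V := by
  have hu : a :: b :: x <+ u₁ ++ b :: U := (singleton_sublist.2 ha).append (hxU.cons_cons b)
  exact (cons_sublist_append_cons_iff ha').1 ((h.sublist_iff_s8 (by simpa using hx)).1 hu)

theorem kEquiv.tails_of_crossing (ha : a ∈ u₁) (hb : b ∉ u₁) (hb' : b ∈ v₁) (ha' : a ∉ v₁)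
    (h : kEquiv (n + 2) (u₁ ++ b :: U) (v₁ ++ a :: V)) : kEquiv n U V :=
  kEquiv_iff.2 fun _ hx =>
    ⟨fun hU => (sublist_cons_self b _).trans (cons_sublist_of_kEquiv_append_cons ha ha' h hx hU),
      fun hV => (sublist_cons_self a _).trans
        (cons_sublist_of_kEquiv_append_cons hb' hb h.symm hx hV)⟩

theorem kEquiv.cons_tail_of_crossing {c : β} (hc : c = a ∨ c = b) (ha : a ∈ u₁) (hb : b ∉ u₁)
    (hb' : b ∈ v₁) (ha' : a ∉ v₁) (h : kEquiv (n + 2) (u₁ ++ b :: U) (v₁ ++ a :: V)) :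
    kEquiv n (c :: V) V := by
  have hUV := h.tails_of_crossing ha hb hb' ha'
  refine kEquiv_iff.2 fun x hx => ⟨fun hxV => ?_, fun hxV => hxV.cons c⟩
  obtain hxV | ⟨y, rfl, hyV⟩ := sublist_cons_iff.1 hxV
  · exact hxV
  have hy : y.length ≤ n := by simp only [length_cons] at hx; omega
  obtain rfl | rfl := hc
  · exact (hUV.sublist_iff_s8 hx).1 (cons_sublist_of_kEquiv_append_cons hb' hb h.symm hy hyV)
  · exact cons_sublist_of_kEquiv_append_cons ha ha' h hy ((hUV.sublist_iff_s8 hy).2 hyV)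

end Crossing

theorem kEquiv.exists_absorbing_tail {P Q X Y : List β} (hab : a ≠ b) (haP : a ∉ P)
    (hbP : b ∉ P) (haQ : a ∉ Q) (hbQ : b ∉ Q) (h : kEquiv (n + 2) (P ++ a :: X) (Q ++ b :: Y)) :
    ∃ V, kEquiv n X V ∧ kEquiv n Y V ∧ ∀ c, c = a ∨ c = b → kEquiv n (c :: V) V := by
  have hbX : b ∈ X := by
    have := (h.mem_iff_s8 b).2 (mem_append_right Q mem_cons_self)
    simpa [hbP, Ne.symm hab] using this
  have haY : a ∈ Y := by
    have := (h.mem_iff_s8 a).1 (mem_append_right P mem_cons_self)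
    simpa [haQ, hab] using this
  obtain ⟨Z, _, U, rfl, rfl, hbZ⟩ := exists_eq_append_cons_of_exists_mem ⟨b, hbX, rfl⟩
  obtain ⟨Z', _, V, rfl, rfl, haZ'⟩ := exists_eq_append_cons_of_exists_mem ⟨a, haY, rfl⟩
  have hb : b ∉ P ++ a :: Z := by simpa [hbP, Ne.symm hab] using fun h => hbZ b h rfl
  have ha' : a ∉ Q ++ b :: Z' := by simpa [haQ, hab] using fun h => haZ' a h rfl
  have hcross : kEquiv (n + 2) ((P ++ a :: Z) ++ b :: U) ((Q ++ b :: Z') ++ a :: V) := by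
    simpa using h
  have hmem : ∀ {c : β} {R S : List β}, c ∈ R ++ c :: S := by simp
  have hUV := hcross.tails_of_crossing hmem hb hmem ha'
  refine ⟨V, ?_, ?_, fun c hc => hcross.cons_tail_of_crossing hc hmem hb hmem ha'⟩
  · refine (kEquiv.of_append_cons haP ha' ?_).mono (Nat.le_succ n)
    simpa using h
  · refine ((kEquiv.of_append_cons hbQ hb ?_).mono (Nat.le_succ n)).trans hUV
    simpa using h.symm

end Subwords

section Reachability

variable {α σ : Type*} {A : NFA α σ} {Δ : Set α} {p q r s : σ} {a : α} {w : List α}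

theorem NFA.evalFrom_singleton_cons (A : NFA α σ) (s : σ) (a : α) (w : List α) :
    A.evalFrom {s} (a :: w) = A.evalFrom (A.step s a) w := by
  rw [NFA.evalFrom_cons, NFA.stepSet_singleton]

theorem NFA.evalFrom_congr_of_forall_mem {S : Set σ} {u v : List α}
    (h : ∀ s ∈ S, A.evalFrom {s} u = A.evalFrom {s} v) : A.evalFrom S u = A.evalFrom S v := by
  rw [NFA.evalFrom_eq_biUnion_singleton, NFA.evalFrom_eq_biUnion_singleton]
  exact Set.iUnion₂_congr h

theorem IsCompleteNFA.evalFrom_nonempty (hc : IsCompleteNFA A) {S : Set σ} (hS : S.Nonempty)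
    (w : List α) : (A.evalFrom S w).Nonempty := by
  induction w generalizing S with
  | nil => exact hS
  | cons a w ih =>
    obtain ⟨s, hs⟩ := hS
    obtain ⟨t, ht⟩ := hc s a
    exact ih ⟨t, NFA.mem_stepSet.2 ⟨s, hs, ht⟩⟩

theorem reachIn_of_mem_evalFrom (hw : ∀ c ∈ w, c ∈ Δ) (h : q ∈ A.evalFrom {s} w) :
    reachIn A Δ s q := by
  induction w generalizing s with
  | nil => exact Set.mem_singleton_iff.1 h ▸ .refl
  | cons c w ih =>
    obtain ⟨t, ht, hq⟩ := NFA.mem_evalFrom_iff_exists.1 (A.evalFrom_singleton_cons s c w ▸ h)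
    exact .head ⟨c, hw c (List.mem_cons_self ..), ht⟩
      (ih (fun d hd => hw d (List.mem_cons_of_mem c hd)) hq)

theorem nfaReach_of_reachIn (h : reachIn A Δ p q) : nfaReach A p q := by
  induction h with
  | refl => exact ⟨[], Set.mem_singleton p⟩
  | tail _ hedge ih =>
    obtain ⟨w, hw⟩ := ih
    obtain ⟨c, -, hc⟩ := hedge
    refine ⟨w ++ [c], ?_⟩
    rw [NFA.evalFrom_append, NFA.evalFrom_singleton]
    exact NFA.mem_stepSet.2 ⟨_, hw, hc⟩

theorem nfaReach_iff_reachIn_univ : nfaReach A p q ↔ reachIn A Set.univ p q :=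
  ⟨fun ⟨_, hw⟩ => reachIn_of_mem_evalFrom (fun _ _ => trivial) hw, nfaReach_of_reachIn⟩

theorem nfaReach.refl (A : NFA α σ) (p : σ) : nfaReach A p p := ⟨[], Set.mem_singleton p⟩

theorem nfaReach.trans (h : nfaReach A p q) (h' : nfaReach A q r) : nfaReach A p r :=
  nfaReach_iff_reachIn_univ.2
    ((nfaReach_iff_reachIn_univ.1 h).trans (nfaReach_iff_reachIn_univ.1 h'))

theorem nfaReach_of_mem_step (h : q ∈ A.step p a) : nfaReach A p q :=
  nfaReach_of_reachIn (Δ := Set.univ) (.single ⟨a, trivial, h⟩)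

noncomputable def numReachable (A : NFA α σ) (s : σ) : ℕ := {r | nfaReach A s r}.ncard

variable [Finite σ]

theorem numReachable_pos : 0 < numReachable A s :=
  (Set.ncard_pos (Set.toFinite _)).2 ⟨s, nfaReach.refl A s⟩

theorem numReachable_le_card : numReachable A s ≤ Nat.card σ := Set.ncard_le_card _

theorem numReachable_le_of_nfaReach (h : nfaReach A p q) : numReachable A q ≤ numReachable A p :=
  Set.ncard_le_ncard (fun _ hr => h.trans hr) (Set.toFinite _)

theorem numReachable_lt_of_nfaReach (hpo : IsPartiallyOrderedNFA A) (h : nfaReach A p q) (hne : p ≠ q) :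
    numReachable A q < numReachable A p :=
  Set.ncard_lt_ncard
    ⟨fun _ hr => h.trans hr, fun hsub => hne (hpo p q h (hsub (nfaReach.refl A p)))⟩
    (Set.toFinite _)

theorem numReachable_lt_of_mem_step (hpo : IsPartiallyOrderedNFA A)
    (ha : a ∉ selfLoopLetters A p) (hq : q ∈ A.step p a) : numReachable A q < numReachable A p :=
  numReachable_lt_of_nfaReach hpo (nfaReach_of_mem_step hq) fun hpq => ha (hpq ▸ hq)

theorem exists_reachIn_isMaximalIn (hpo : IsPartiallyOrderedNFA A) (Γ : Set α) (q : σ) :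
    ∃ m, reachIn A Γ q m ∧ IsMaximalIn A Γ m := by
  obtain ⟨m, hqm, hmin⟩ := Set.exists_min_image {r | reachIn A Γ q r} (numReachable A)
    (Set.toFinite _) ⟨q, .refl⟩
  refine ⟨m, hqm, fun r hmr => ?_⟩
  obtain rfl : m = r := by
    by_contra hne
    exact (hmin r (hqm.trans hmr)).not_gt (numReachable_lt_of_nfaReach hpo (nfaReach_of_reachIn hmr) hne)
  exact .refl

end Reachability

section PartiallyOrderedUMS

variable {α σ : Type*} {A : NFA α σ} {p : σ} {a b : α} {w : List α}

theorem step_eq_singleton_of_mem_selfLoopLetters (hpo : IsPartiallyOrderedNFA A)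
    (hums : HasUMS A) (ha : a ∈ selfLoopLetters A p) : A.step p a = {p} := by
  refine Set.Subset.antisymm (fun r hr => ?_) (Set.singleton_subset_iff.2 ha)
  have hpr : reachIn A (selfLoopLetters A p) p r := .single ⟨a, ha, hr⟩
  exact hpo r p (nfaReach_of_reachIn ((hums p p .refl).2 rfl r hpr)) (nfaReach_of_reachIn hpr)

theorem evalFrom_eq_singleton_of_forall_mem_selfLoopLetters (hpo : IsPartiallyOrderedNFA A)
    (hums : HasUMS A) (hw : ∀ a ∈ w, a ∈ selfLoopLetters A p) : A.evalFrom {p} w = {p} := by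
  induction w with
  | nil => rfl
  | cons a w ih =>
    rw [A.evalFrom_singleton_cons, step_eq_singleton_of_mem_selfLoopLetters hpo hums
      (hw a (List.mem_cons_self ..)), ih fun b hb => hw b (List.mem_cons_of_mem a hb)]

theorem eq_of_reachIn_of_subset_selfLoopLetters [Finite σ] (hpo : IsPartiallyOrderedNFA A)
    (hums : HasUMS A) {Δ : Set α} {s q₁ q₂ : σ} (h₁ : reachIn A Δ s q₁) (h₂ : reachIn A Δ s q₂)
    (hΔ₁ : Δ ⊆ selfLoopLetters A q₁) (hΔ₂ : Δ ⊆ selfLoopLetters A q₂) : q₁ = q₂ := by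
  suffices key : ∀ {q₁ q₂}, reachIn A Δ s q₁ → reachIn A Δ s q₂ →
      Δ ⊆ selfLoopLetters A q₁ → nfaReach A q₂ q₁ from
    hpo _ _ (key h₂ h₁ hΔ₂) (key h₁ h₂ hΔ₁)
  intro q₁ q₂ h₁ h₂ hΔ
  set Γ := selfLoopLetters A q₁
  have lift : ∀ {p q}, reachIn A Δ p q → reachIn A Γ p q :=
    Relation.ReflTransGen.mono (fun _ _ ⟨a, ha, h⟩ => ⟨a, hΔ ha, h⟩) _ _
  obtain ⟨m, h₂m, hm⟩ := exists_reachIn_isMaximalIn hpo Γ q₂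
  have hcomp : sameComponent A Γ q₁ m :=
    (Relation.ReflTransGen.mono (fun _ _ => Or.inr) _ _ (lift h₁).swap).trans
      (Relation.ReflTransGen.mono (fun _ _ => Or.inl) _ _ ((lift h₂).trans h₂m))
  obtain rfl := (hums q₁ m hcomp).1 hm
  exact nfaReach_of_reachIn h₂m

def alternating (a b : α) (m : ℕ) : List α := (List.replicate m [a, b]).flatten

theorem alternating_succ (a b : α) (m : ℕ) :
    alternating a b (m + 1) = a :: b :: alternating a b m := by
  simp [alternating, List.replicate_succ]

theorem eq_or_eq_of_mem_alternating {c : α} {m : ℕ} (h : c ∈ alternating a b m) :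
    c = a ∨ c = b := by
  simp only [alternating, List.mem_flatten, List.mem_replicate] at h
  obtain ⟨l, ⟨-, rfl⟩, h⟩ := h
  simpa using h

theorem numReachable_add_le_or_of_mem_evalFrom_alternating [Finite σ]
    (hpo : IsPartiallyOrderedNFA A) (hums : HasUMS A) (m : ℕ) {s r : σ}
    (hr : r ∈ A.evalFrom {s} (alternating a b m)) :
    numReachable A r + m ≤ numReachable A s ∨
      a ∈ selfLoopLetters A r ∧ b ∈ selfLoopLetters A r := by
  induction m generalizing s with
  | zero => exact .inl (Set.mem_singleton_iff.1 hr ▸ le_rfl)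
  | succ m ih =>
    by_cases hab : a ∈ selfLoopLetters A s ∧ b ∈ selfLoopLetters A s
    · rw [evalFrom_eq_singleton_of_forall_mem_selfLoopLetters hpo hums fun c hc => by
        obtain rfl | rfl := eq_or_eq_of_mem_alternating hc
        exacts [hab.1, hab.2]] at hr
      exact .inr (Set.mem_singleton_iff.1 hr ▸ hab)
    rw [alternating_succ, A.evalFrom_singleton_cons, NFA.mem_evalFrom_iff_exists] at hr
    obtain ⟨t, ht, hr⟩ := hr
    rw [A.evalFrom_singleton_cons, NFA.mem_evalFrom_iff_exists] at hr
    obtain ⟨t', ht', hr⟩ := hr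
    have hlt : numReachable A t' < numReachable A s := by
      by_cases ha : a ∈ selfLoopLetters A s
      · rw [step_eq_singleton_of_mem_selfLoopLetters hpo hums ha, Set.mem_singleton_iff] at ht
        subst ht
        exact numReachable_lt_of_mem_step hpo (fun hb => hab ⟨ha, hb⟩) ht'
      · exact (numReachable_le_of_nfaReach (nfaReach_of_mem_step ht')).trans_lt
          (numReachable_lt_of_mem_step hpo ha ht)
    obtain h | h := ih hr
    · exact .inl (by omega)
    · exact .inr h

end PartiallyOrderedUMS

section PiecewiseTestable

variable {α σ : Type*} [Finite σ] {A : NFA α σ}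

theorem evalFrom_alternating_comm (hcomp : IsCompleteNFA A) (hpo : IsPartiallyOrderedNFA A)
    (hums : HasUMS A) (s : σ) (a b : α) {m : ℕ} (hm : numReachable A s ≤ m) :
    A.evalFrom {s} (alternating a b m) = A.evalFrom {s} (alternating b a m) := by
  have stable : ∀ c d, ∀ r ∈ A.evalFrom {s} (alternating c d m),
      reachIn A {c, d} s r ∧ {c, d} ⊆ selfLoopLetters A r := fun c d r hr =>
    ⟨reachIn_of_mem_evalFrom (fun _ he => eq_or_eq_of_mem_alternating he) hr, by
      obtain h | ⟨hc, hd⟩ := numReachable_add_le_or_of_mem_evalFrom_alternating hpo hums m hr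
      · have := numReachable_pos (A := A) (s := r)
        omega
      · exact Set.insert_subset hc (Set.singleton_subset_iff.2 hd)⟩
  have unique : ∀ r₁ ∈ A.evalFrom {s} (alternating a b m),
      ∀ r₂ ∈ A.evalFrom {s} (alternating b a m), r₁ = r₂ := fun r₁ h₁ r₂ h₂ => by
    obtain ⟨hs₁, hΔ₁⟩ := stable a b r₁ h₁
    obtain ⟨hs₂, hΔ₂⟩ := stable b a r₂ h₂
    rw [Set.pair_comm] at hs₂ hΔ₂
    exact eq_of_reachIn_of_subset_selfLoopLetters hpo hums hs₁ hs₂ hΔ₁ hΔ₂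
  obtain ⟨r₁, h₁⟩ := hcomp.evalFrom_nonempty (Set.singleton_nonempty s) (alternating a b m)
  obtain ⟨r₂, h₂⟩ := hcomp.evalFrom_nonempty (Set.singleton_nonempty s) (alternating b a m)
  ext r
  exact ⟨fun hr => unique r hr r₂ h₂ ▸ h₂, fun hr => unique r₁ h₁ r hr ▸ h₁⟩

theorem evalFrom_step_eq_of_absorbing (hcomp : IsCompleteNFA A)
    (hpo : IsPartiallyOrderedNFA A) (hums : HasUMS A) {s : σ} {N : ℕ}
    (ih : ∀ c ∉ selfLoopLetters A s, ∀ u v, kEquiv N u v →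
      A.evalFrom (A.step s c) u = A.evalFrom (A.step s c) v)
    {a b : α} (ha : a ∉ selfLoopLetters A s) (hb : b ∉ selfLoopLetters A s) {V : List α}
    (hV : ∀ c, c = a ∨ c = b → kEquiv N (c :: V) V) :
    A.evalFrom (A.step s a) V = A.evalFrom (A.step s b) V := by
  set m := numReachable A s
  have via_alternating : ∀ {c d : α}, c ∉ selfLoopLetters A s → (c = a ∨ c = b) →
      (d = a ∨ d = b) →
      A.evalFrom (A.step s c) V = A.evalFrom (A.evalFrom {s} (alternating c d (m + 1))) V := by
    intro c d hc hc' hd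
    rw [alternating_succ, A.evalFrom_singleton_cons, ← NFA.evalFrom_append]
    refine ih c hc _ _ (kEquiv_append_of_forall_mem fun e he => hV e ?_).symm
    obtain rfl | he := List.mem_cons.1 he
    · exact hd
    · obtain rfl | rfl := eq_or_eq_of_mem_alternating he <;> assumption
  rw [via_alternating ha (.inl rfl) (.inr rfl), via_alternating hb (.inr rfl) (.inl rfl),
    evalFrom_alternating_comm hcomp hpo hums s a b (Nat.le_succ m)]

theorem evalFrom_eq_of_kEquiv_add_two (hcomp : IsCompleteNFA A)
    (hpo : IsPartiallyOrderedNFA A) (hums : HasUMS A) {s : σ} {N : ℕ}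
    (ih : ∀ c ∉ selfLoopLetters A s, ∀ u v, kEquiv N u v →
      A.evalFrom (A.step s c) u = A.evalFrom (A.step s c) v)
    {u v : List α} (huv : kEquiv (N + 2) u v) : A.evalFrom {s} u = A.evalFrom {s} v := by
  set Γ := selfLoopLetters A s
  by_cases hu : ∀ c ∈ u, c ∈ Γ
  · have hv : ∀ c ∈ v, c ∈ Γ := fun c hc => hu c ((huv.mem_iff_s8 c).2 hc)
    rw [evalFrom_eq_singleton_of_forall_mem_selfLoopLetters hpo hums hu,
      evalFrom_eq_singleton_of_forall_mem_selfLoopLetters hpo hums hv]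
  push Not at hu
  obtain ⟨P, a, X, rfl, ha, hP⟩ := List.exists_eq_append_cons_of_exists_mem hu
  obtain ⟨Q, b, Y, rfl, hb, hQ⟩ := List.exists_eq_append_cons_of_exists_mem (p := (· ∉ Γ))
    ⟨a, (huv.mem_iff_s8 a).1 (by simp), ha⟩
  simp only [not_not] at hP hQ
  have exit : ∀ {c : α} {R Z : List α}, (∀ x ∈ R, x ∈ Γ) →
      A.evalFrom {s} (R ++ c :: Z) = A.evalFrom (A.step s c) Z := fun hR => by
    rw [NFA.evalFrom_append, evalFrom_eq_singleton_of_forall_mem_selfLoopLetters hpo hums hR,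
      A.evalFrom_singleton_cons]
  have not_mem : ∀ {c : α} {R : List α}, c ∉ Γ → (∀ x ∈ R, x ∈ Γ) → c ∉ R :=
    fun hc hR hcR => hc (hR _ hcR)
  rw [exit hP, exit hQ]
  by_cases hab : a = b
  · subst hab
    exact ih a ha X Y ((huv.of_append_cons (not_mem ha hP) (not_mem ha hQ)).mono (by omega))
  obtain ⟨V, hXV, hYV, hV⟩ := huv.exists_absorbing_tail hab (not_mem ha hP) (not_mem hb hP)
    (not_mem ha hQ) (not_mem hb hQ)
  rw [ih a ha X V hXV, ih b hb Y V hYV,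
    evalFrom_step_eq_of_absorbing hcomp hpo hums ih ha hb hV]

theorem evalFrom_eq_of_kEquiv (hcomp : IsCompleteNFA A) (hpo : IsPartiallyOrderedNFA A)
    (hums : HasUMS A) (s : σ) {u v : List α} (h : kEquiv (2 * numReachable A s) u v) :
    A.evalFrom {s} u = A.evalFrom {s} v := by
  induction hn : numReachable A s using Nat.strong_induction_on generalizing s u v with
  | _ n ih =>
  obtain ⟨N, rfl⟩ := Nat.exists_eq_add_one_of_ne_zero (hn ▸ numReachable_pos.ne')
  refine evalFrom_eq_of_kEquiv_add_two hcomp hpo hums (N := 2 * N)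
    (fun c hc u' v' h' => NFA.evalFrom_congr_of_forall_mem fun r hr => ?_) (by rwa [hn] at h)
  have hlt := numReachable_lt_of_mem_step hpo hc hr
  exact ih _ (by omega) r (h'.mono (by omega)) rfl

theorem isPT_accepts (hcomp : IsCompleteNFA A) (hpo : IsPartiallyOrderedNFA A)
    (hums : HasUMS A) : IsPT (2 * Nat.card σ) A.accepts := by
  intro u v huv
  have heval : A.evalFrom A.start u = A.evalFrom A.start v :=
    NFA.evalFrom_congr_of_forall_mem fun s _ => evalFrom_eq_of_kEquiv hcomp hpo hums s
      (huv.mono (Nat.mul_le_mul_left 2 numReachable_le_card))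
  simp only [NFA.mem_accepts, heval]

end PiecewiseTestable

section DFA

variable {α σ : Type*} (D : DFA α σ) {p q : σ} {a : α}

theorem DFA.isCompleteNFA_toNFA : IsCompleteNFA D.toNFA := fun _ _ => Set.singleton_nonempty _

theorem DFA.nfaReach_toNFA_iff : nfaReach D.toNFA p q ↔ ∃ w, D.evalFrom p w = q := by
  simp [nfaReach, eq_comm]

theorem DFA.mem_selfLoopLetters_toNFA : a ∈ selfLoopLetters D.toNFA p ↔ D.step p a = p := by
  simp [selfLoopLetters, eq_comm]

theorem DFA.hasUMS_toNFA (hpo : IsPartiallyOrderedNFA D.toNFA)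
    (huniq : ∀ (Γ : Set α) (p q : σ), sameComponent D.toNFA Γ p q →
      (∀ a ∈ Γ, D.step p a = p) → (∀ a ∈ Γ, D.step q a = q) → p = q) :
    HasUMS D.toNFA := by
  intro p q hpq
  have hp : ∀ a ∈ selfLoopLetters D.toNFA p, D.step p a = p := fun _ ha =>
    D.mem_selfLoopLetters_toNFA.1 ha
  refine ⟨fun hq => (huniq _ p q hpq hp fun a ha => ?_).symm, ?_⟩
  · have hedge : reachIn D.toNFA (selfLoopLetters D.toNFA p) q (D.step q a) := .single ⟨a, ha, rfl⟩
    exact hpo _ _ (nfaReach_of_reachIn (hq _ hedge)) (nfaReach_of_reachIn hedge)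
  · rintro rfl r hqr
    suffices r = q from this ▸ .refl
    induction hqr with
    | refl => rfl
    | tail _ hedge ih =>
      obtain ⟨a, ha, hr⟩ := hedge
      subst ih
      exact (Set.mem_singleton_iff.1 hr).trans (hp a ha)

end DFA

section SubwordDFA

variable {α β : Type*} (f : α → β) (k : ℕ)

abbrev SubwordClass (β : Type*) (k : ℕ) : Type _ := Quotient (Setoid.ker (subk (α := β) k))

instance [Finite β] : Finite (SubwordClass β k) := by
  have : Finite (Set.range (Setoid.kerLift (subk (α := β) k))) := by
    refine ((List.finite_length_le β k).finite_subsets.subset ?_).to_subtype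
    rintro _ ⟨c, rfl⟩
    induction c using Quotient.ind
    exact fun x hx => hx.1
  exact Finite.of_injective_finite_range (Setoid.kerLift_injective _)

def subwordDFA (L : Language α) : DFA α (SubwordClass β k) where
  step c a := c.lift (fun w => Quotient.mk'' (w ++ [f a])) fun _ _ h =>
    Quotient.sound' (kEquiv.append (Setoid.ker_def.1 h) (kEquiv.refl k _))
  start := Quotient.mk'' []
  accept := (fun x => Quotient.mk'' (x.map f)) '' L

variable {f k} {L : Language α}

theorem subwordDFA_evalFrom_mk (w : List β) (x : List α) :
    (subwordDFA f k L).evalFrom (Quotient.mk'' w) x = Quotient.mk'' (w ++ x.map f) := by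
  induction x generalizing w with
  | nil => simp
  | cons a x ih => exact (ih _).trans (by simp)

theorem subwordDFA_accepts (hf : Function.Injective f) (hL : IsPT k L) :
    (subwordDFA f k L).accepts = L := by
  ext x
  change (subwordDFA f k L).evalFrom (Quotient.mk'' []) x ∈ (subwordDFA f k L).accept ↔ _
  rw [subwordDFA_evalFrom_mk, List.nil_append]
  exact ⟨fun ⟨y, hy, he⟩ => (hL y x (kEquiv.of_map hf (Quotient.eq''.1 he))).1 hy,
    fun hx => ⟨x, hx, rfl⟩⟩

theorem subk_subset_subwordDFA_evalFrom (c : SubwordClass β k) (x : List α) :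
    Setoid.kerLift (subk k) c ⊆ Setoid.kerLift (subk k) ((subwordDFA f k L).evalFrom c x) := by
  induction c using Quotient.ind
  rw [← Quotient.mk''_eq_mk, subwordDFA_evalFrom_mk]
  exact fun y hy => ⟨hy.1, hy.2.trans (List.sublist_append_left _ _)⟩

theorem subwordDFA_isPartiallyOrdered : IsPartiallyOrderedNFA (subwordDFA f k L).toNFA := by
  intro p q hpq hqp
  obtain ⟨x, rfl⟩ := (DFA.nfaReach_toNFA_iff _).1 hpq
  obtain ⟨y, hy⟩ := (DFA.nfaReach_toNFA_iff _).1 hqp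
  refine Setoid.kerLift_injective _ ((subk_subset_subwordDFA_evalFrom p x).antisymm ?_)
  conv_rhs => rw [← hy]
  exact subk_subset_subwordDFA_evalFrom _ y

variable (f k L) in
def subkClosure (Γ : Set α) (c : SubwordClass β k) : Set (List β) :=
  ⋃ z ∈ {z : List α | ∀ a ∈ z, a ∈ Γ},
    Setoid.kerLift (subk k) ((subwordDFA f k L).evalFrom c z)

theorem subkClosure_step {Γ : Set α} {a : α} (ha : a ∈ Γ) (c : SubwordClass β k) :
    subkClosure f k L Γ ((subwordDFA f k L).step c a) = subkClosure f k L Γ c := by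
  refine Set.Subset.antisymm (Set.iUnion₂_subset fun z hz => ?_) (Set.iUnion₂_subset fun z hz => ?_)
  · exact Set.subset_iUnion₂_of_subset (a :: z) (List.forall_mem_cons.2 ⟨ha, hz⟩) subset_rfl
  · refine Set.subset_iUnion₂_of_subset z hz ?_
    induction c using Quotient.ind with | _ w
    change Setoid.kerLift (subk k) ((subwordDFA f k L).evalFrom (Quotient.mk'' w) z) ⊆
      Setoid.kerLift (subk k) ((subwordDFA f k L).evalFrom (Quotient.mk'' (w ++ [f a])) z)
    rw [subwordDFA_evalFrom_mk, subwordDFA_evalFrom_mk]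
    exact fun y hy => ⟨hy.1, hy.2.trans (by simp)⟩

theorem subkClosure_eq_of_sameComponent {Γ : Set α} {p q : SubwordClass β k}
    (h : sameComponent (subwordDFA f k L).toNFA Γ p q) :
    subkClosure f k L Γ p = subkClosure f k L Γ q := by
  induction h with
  | refl => rfl
  | tail _ hedge ih =>
    rw [ih]
    obtain ⟨a, ha, hr⟩ | ⟨a, ha, hr⟩ := hedge <;>
      rw [Set.mem_singleton_iff.1 hr, subkClosure_step ha]

theorem subkClosure_eq_of_forall_step_eq {Γ : Set α} {c : SubwordClass β k}
    (hc : ∀ a ∈ Γ, (subwordDFA f k L).step c a = c) :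
    subkClosure f k L Γ c = Setoid.kerLift (subk k) c := by
  have hstable : ∀ z : List α, (∀ a ∈ z, a ∈ Γ) → (subwordDFA f k L).evalFrom c z = c := by
    intro z hz
    induction z with
    | nil => rfl
    | cons a z ih =>
      rw [DFA.evalFrom_cons, hc a (hz a List.mem_cons_self),
        ih fun b hb => hz b (List.mem_cons_of_mem a hb)]
  refine Set.Subset.antisymm (Set.iUnion₂_subset fun z hz => (hstable z hz).symm ▸ subset_rfl) ?_
  exact Set.subset_iUnion₂_of_subset [] (fun _ h => absurd h List.not_mem_nil) subset_rfl

theorem subwordDFA_hasUMS : HasUMS (subwordDFA f k L).toNFA :=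
  DFA.hasUMS_toNFA _ subwordDFA_isPartiallyOrdered fun Γ _ _ hpq hp hq =>
    Setoid.kerLift_injective _ <| by
      rw [← subkClosure_eq_of_forall_step_eq hp, ← subkClosure_eq_of_forall_step_eq hq,
        subkClosure_eq_of_sameComponent hpq]

end SubwordDFA

theorem stmt8_general {α : Type*} [Fintype α] (L : Language α) :
    (∃ k : ℕ, IsPT k L) ↔
      ∃ (σ : Type) (_ : Fintype σ) (A : NFA α σ),
        A.accepts = L ∧ IsCompleteNFA A ∧ IsPartiallyOrderedNFA A ∧ HasUMS A := by
  constructor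
  · rintro ⟨k, hL⟩
    -- words are encoded over `Fin (card α)` so that the state type lies in `Type`
    let D := subwordDFA (Fintype.equivFin α) k L
    exact ⟨_, Fintype.ofFinite _, D.toNFA,
      by rw [DFA.toNFA_correct, subwordDFA_accepts (Fintype.equivFin α).injective hL],
      D.isCompleteNFA_toNFA, subwordDFA_isPartiallyOrdered, subwordDFA_hasUMS⟩
  · rintro ⟨_, _, A, rfl, hcomp, hpo, hums⟩
    exact ⟨_, isPT_accepts hcomp hpo hums⟩

/-- A regular language is piecewise testable iff it is recognized by a complete,
partially ordered NFA satisfying the UMS property (Theorem 10 of the paper). -/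
theorem stmt8 {α : Type*} [Fintype α] (L : Language α)
    (hreg : ∃ (σ : Type) (_ : Fintype σ) (D : DFA α σ), D.accepts = L) :
    (∃ k : ℕ, IsPT k L) ↔
      ∃ (σ : Type) (_ : Fintype σ) (A : NFA α σ),
        A.accepts = L ∧ IsCompleteNFA A ∧ IsPartiallyOrderedNFA A ∧ HasUMS A :=
  stmt8_general L
end
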